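/- The q-binomial theorem: for complex a, z, q with |z| < 1 and |q| < 1, sum_{n=0}^{infinity} (a;q)_n z^n / (q;q)_n = (az;q)_infinity / (z;q)_infinity. -/

import Mathlib

/-- `(A;q)_n` -/
noncomputable def qp (q a : ℂ) (n : ℕ) : ℂ :=
  ∏ k ∈ Finset.range n, (1 - a * q ^ k)

/-- `(A;q)_∞` -/
noncomputable def qpinf (q a : ℂ) : ℂ := ∏' k : ℕ, (1 - a * q ^ k)

/-!
Write `S(w) = ∑ cₙ wⁿ` with `cₙ = (a;q)ₙ / (q;q)ₙ`. The recurrence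
`cₙ₊₁ (1 - qⁿ⁺¹) = cₙ (1 - a qⁿ)` gives the functional equation `(1 - w) S(w) = (1 - a w) S(q w)`,
and iterating it `N` times gives `S(z) (z;q)_N = S(z q^N) (a z;q)_N`. As `N → ∞`, `S(z q^N) → S(0) = 1`
and the finite products converge to the infinite ones; `(z;q)_∞ ≠ 0` because `|z| < 1`.
-/

open Filter Topology

section QPochhammer

variable {q : ℂ}

@[simp]
lemma qp_zero (q a : ℂ) : qp q a 0 = 1 := Finset.prod_range_zero _

lemma qp_succ (q a : ℂ) (n : ℕ) : qp q a (n + 1) = qp q a n * (1 - a * q ^ n) :=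
  Finset.prod_range_succ _ _

lemma norm_mul_pow_le (hq : ‖q‖ ≤ 1) (a : ℂ) (k : ℕ) : ‖a * q ^ k‖ ≤ ‖a‖ := by
  rw [norm_mul, norm_pow]
  exact mul_le_of_le_one_right (norm_nonneg a) (pow_le_one₀ (norm_nonneg q) hq)

lemma one_sub_mul_pow_ne_zero (hq : ‖q‖ ≤ 1) {a : ℂ} (ha : ‖a‖ < 1) (k : ℕ) :
    1 - a * q ^ k ≠ 0 := by
  intro h
  have := (norm_mul_pow_le hq a k).trans_lt ha
  rw [← sub_eq_zero.1 h, norm_one] at this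
  exact lt_irrefl _ this

lemma summable_norm_mul_pow (hq : ‖q‖ < 1) (a : ℂ) : Summable fun k : ℕ ↦ ‖a * q ^ k‖ := by
  simpa [norm_mul, norm_pow] using (summable_geometric_of_lt_one (norm_nonneg q) hq).mul_left ‖a‖

lemma multipliable_one_sub_mul_pow (hq : ‖q‖ < 1) (a : ℂ) :
    Multipliable fun k : ℕ ↦ 1 - a * q ^ k := by
  simpa [sub_eq_add_neg] using
    multipliable_one_add_of_summable (f := fun k : ℕ ↦ -(a * q ^ k))
      (by simpa using summable_norm_mul_pow hq a)

lemma tendsto_qp_qpinf (hq : ‖q‖ < 1) (a : ℂ) : Tendsto (qp q a) atTop (𝓝 (qpinf q a)) :=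
  (multipliable_one_sub_mul_pow hq a).hasProd.tendsto_prod_nat

lemma qpinf_ne_zero (hq : ‖q‖ < 1) {a : ℂ} (ha : ‖a‖ < 1) : qpinf q a ≠ 0 := by
  simpa [qpinf, sub_eq_add_neg] using
    tprod_one_add_ne_zero_of_summable (f := fun k : ℕ ↦ -(a * q ^ k))
      (fun k ↦ by simpa [sub_eq_add_neg] using one_sub_mul_pow_ne_zero hq.le ha k)
      (by simpa using summable_norm_mul_pow hq a)

lemma qp_self_ne_zero (hq : ‖q‖ < 1) (n : ℕ) : qp q q n ≠ 0 :=
  Finset.prod_ne_zero_iff.2 fun k _ ↦ one_sub_mul_pow_ne_zero hq.le hq k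

end QPochhammer

noncomputable def qbinomCoeff (q a : ℂ) (n : ℕ) : ℂ := qp q a n / qp q q n

noncomputable def qbinomSeries (q a w : ℂ) : ℂ := ∑' n : ℕ, qbinomCoeff q a n * w ^ n

section QBinomial

variable {q : ℂ} (a : ℂ)

@[simp]
lemma qbinomCoeff_zero : qbinomCoeff q a 0 = 1 := by simp [qbinomCoeff]

lemma qbinomCoeff_succ_mul (hq : ‖q‖ < 1) (n : ℕ) :
    qbinomCoeff q a (n + 1) * (1 - q ^ (n + 1)) = qbinomCoeff q a n * (1 - a * q ^ n) := by
  have := qp_self_ne_zero hq n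
  have : 1 - q ^ (n + 1) ≠ 0 := pow_succ' q n ▸ one_sub_mul_pow_ne_zero hq.le hq n
  rw [qbinomCoeff, qbinomCoeff, qp_succ, qp_succ, ← pow_succ']
  field_simp

lemma exists_norm_qbinomCoeff_le (hq : ‖q‖ < 1) : ∃ C, ∀ n, ‖qbinomCoeff q a n‖ ≤ C := by
  obtain ⟨C, hC⟩ := ((tendsto_qp_qpinf hq a).div (tendsto_qp_qpinf hq q)
    (qpinf_ne_zero hq hq)).norm.bddAbove_range
  exact ⟨C, fun n ↦ hC (Set.mem_range_self n)⟩

lemma summable_qbinomCoeff_mul_pow (hq : ‖q‖ < 1) {w : ℂ} (hw : ‖w‖ < 1) :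
    Summable fun n ↦ qbinomCoeff q a n * w ^ n := by
  obtain ⟨C, hC⟩ := exists_norm_qbinomCoeff_le a hq
  refine .of_norm_bounded ((summable_geometric_of_lt_one (norm_nonneg w) hw).mul_left C) fun n ↦ ?_
  rw [norm_mul, norm_pow]
  exact mul_le_mul_of_nonneg_right (hC n) (by positivity)

lemma one_sub_mul_qbinomSeries (hq : ‖q‖ < 1) {w : ℂ} (hw : ‖w‖ < 1) :
    (1 - w) * qbinomSeries q a w = (1 - a * w) * qbinomSeries q a (q * w) := by
  have hqw : ‖q * w‖ < 1 := by simpa [mul_comm] using (norm_mul_pow_le hq.le w 1).trans_lt hw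
  have hS := (summable_qbinomCoeff_mul_pow a hq hw).hasSum
  have hS' := (summable_qbinomCoeff_mul_pow a hq hqw).hasSum
  have hlow : HasSum (fun n ↦ qbinomCoeff q a n * (1 - q ^ n) * w ^ n)
      (qbinomSeries q a w - qbinomSeries q a (q * w)) := by
    refine (hS.sub hS').congr_fun fun n ↦ ?_
    rw [mul_pow]
    ring
  have hhigh : HasSum (fun n ↦ qbinomCoeff q a n * (1 - a * q ^ n) * w ^ (n + 1))
      (w * qbinomSeries q a w - a * w * qbinomSeries q a (q * w)) := by
    refine ((hS.mul_left w).sub (hS'.mul_left (a * w))).congr_fun fun n ↦ ?_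
    rw [mul_pow, pow_succ]
    ring
  -- `hlow` has vanishing constant term, and the recurrence turns its shift into `hhigh`
  have hshift := (hasSum_nat_add_iff' 1).2 hlow
  simp only [qbinomCoeff_succ_mul a hq, Finset.sum_range_one, pow_zero, sub_self, mul_zero,
    mul_one, sub_zero] at hshift
  linear_combination hshift.unique hhigh

lemma qbinomSeries_mul_qp (hq : ‖q‖ < 1) {z : ℂ} (hz : ‖z‖ < 1) (N : ℕ) :
    qbinomSeries q a z * qp q z N = qbinomSeries q a (z * q ^ N) * qp q (a * z) N := by
  induction N with
  | zero => simp
  | succ N ih =>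
    have step := one_sub_mul_qbinomSeries a hq ((norm_mul_pow_le hq.le z N).trans_lt hz)
    rw [show q * (z * q ^ N) = z * q ^ (N + 1) by ring] at step
    rw [qp_succ, qp_succ, ← mul_assoc, ih]
    linear_combination qp q (a * z) N * step

lemma tendsto_qbinomSeries_mul_pow (hq : ‖q‖ < 1) {z : ℂ} (hz : ‖z‖ < 1) :
    Tendsto (fun N : ℕ ↦ qbinomSeries q a (z * q ^ N)) atTop (𝓝 1) := by
  obtain ⟨C, hC⟩ := exists_norm_qbinomCoeff_le a hq
  have hC0 : 0 ≤ C := (norm_nonneg _).trans (hC 0)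
  have hzq : Tendsto (fun N : ℕ ↦ z * q ^ N) atTop (𝓝 0) := by
    simpa using (tendsto_pow_atTop_nhds_zero_of_norm_lt_one hq).const_mul z
  have := tendsto_tsum_of_dominated_convergence (bound := fun n ↦ C * ‖z‖ ^ n)
    ((summable_geometric_of_lt_one (norm_nonneg z) hz).mul_left C)
    (fun n ↦ (hzq.pow n).const_mul (qbinomCoeff q a n))
    (.of_forall fun N n ↦ by
      rw [norm_mul, norm_pow]
      gcongr
      exacts [hC n, norm_mul_pow_le hq.le z N])
  rwa [tsum_eq_single 0 fun n hn ↦ by simp [hn], pow_zero, mul_one, qbinomCoeff_zero] at this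

end QBinomial

theorem q_binomial_theorem (a z q : ℂ) (hz : ‖z‖ < 1) (hq : ‖q‖ < 1) :
    ∑' n : ℕ, qp q a n * z ^ n / qp q q n = qpinf q (a * z) / qpinf q z := by
  have hlim : qbinomSeries q a z * qpinf q z = 1 * qpinf q (a * z) :=
    tendsto_nhds_unique
      (((tendsto_qp_qpinf hq z).const_mul _).congr fun N ↦ qbinomSeries_mul_qp a hq hz N)
      ((tendsto_qbinomSeries_mul_pow a hq hz).mul (tendsto_qp_qpinf hq (a * z)))
  rw [eq_div_iff (qpinf_ne_zero hq hz), ← one_mul (qpinf q (a * z)), ← hlim, qbinomSeries]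
  congr 1
  exact tsum_congr fun n ↦ by rw [qbinomCoeff, div_mul_eq_mul_div, mul_div_right_comm]
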